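/- The map 𝔅 sending the isomorphism class of a tree of spheres T marked by X to the collection (α_t(x)) indexed by quadruples (t, x) ∈ Quad_X (t a triple of distinct elements, x a fourth distinct element) is injective on isomorphism classes of trees of spheres marked by X. -/

import Mathlib

open SimpleGraph

noncomputable section

/-- The branch of a vertex `v` in the direction of a neighbor `u`. -/
def Branch {V : Type*} (G : SimpleGraph V) (v u : V) : Set V :=
  {w | ∃ p : G.Walk u w, v ∉ p.support}

/-- A stable combinatorial tree marked by `X`. -/
structure MarkedStableTree (X V : Type*) (G : SimpleGraph V) (m : X → V) : Prop where
  tree : G.IsTree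
  inj : Function.Injective m
  leaf_iff : ∀ v, (G.neighborSet v).ncard = 1 ↔ v ∈ Set.range m
  stable : ∀ v, v ∉ Set.range m → 3 ≤ (G.neighborSet v).ncard

/-- Two vertices lie in a common branch at `v`. -/
def SameBranch {V : Type*} (G : SimpleGraph V) (v p q : V) : Prop :=
  ∃ u, G.Adj v u ∧ p ∈ Branch G v u ∧ q ∈ Branch G v u

/-- The Möbius map `z ↦ (a z + b)/(c z + d)` on the Riemann sphere `P¹(ℂ) = Option ℂ`. -/
def moebiusMap (a b c d : ℂ) : Option ℂ → Option ℂ :=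
  fun z => z.elim (if c = 0 then none else some (a / c))
    (fun w => if c * w + d = 0 then none else some ((a * w + b) / (c * w + d)))

/-- A Möbius transformation of the Riemann sphere. -/
def IsMoebius (φ : Option ℂ → Option ℂ) : Prop :=
  ∃ a b c d : ℂ, a * d - b * c ≠ 0 ∧ φ = moebiusMap a b c d

/-- A tree of spheres marked by `X`. -/
structure SphereTree (X V : Type*) (G : SimpleGraph V) (m : X → V)
    (a : V → X → Option ℂ) : Prop where
  marked : MarkedStableTree X V G m
  compat : ∀ v, v ∉ Set.range m → ∀ x x',
    (a v x = a v x' ↔ SameBranch G v (m x) (m x'))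

/-!
Every internal vertex of a stable tree separates three leaves, and three distinct leaves are
separated by exactly one vertex. So an internal vertex `v` of `T` has a partner `v'` in `T'`
separating the same three leaves; the charts normalising these three leaves at `v` and at `v'`
agree on every other leaf, hence `a' v' = φ ∘ a v` for a Möbius `φ`, and `v`, `v'` induce the same
partition of the leaves. A vertex is determined by the partition it induces, and `v`, `w` are
adjacent iff some class at `v` is the complement of some class at `w`; so the matching of vertices
is a graph isomorphism.
-/

namespace Moebius

/-- Homogeneous coordinates on `P¹(ℂ)`, with `∞ = none` at `(1, 0)`. -/
def homog (z : Option ℂ) : ℂ × ℂ := z.elim (1, 0) fun w => (w, 1)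

/-- The point `[p : q]` of `P¹(ℂ)`; the junk value at `(0, 0)` is `∞`. -/
def ofHomog (p q : ℂ) : Option ℂ := if q = 0 then none else some (p / q)

/-- The bracket `[u, v]`. -/
def cross (u v : ℂ × ℂ) : ℂ := u.1 * v.2 - u.2 * v.1

lemma homog_ne_zero (z : Option ℂ) : homog z ≠ 0 := by
  cases z <;> simp [homog, Prod.ext_iff]

lemma cross_homog_ne_zero {z w : Option ℂ} (h : z ≠ w) : cross (homog z) (homog w) ≠ 0 := by
  cases z <;> cases w <;> simp_all [homog, cross, sub_eq_zero]

lemma ofHomog_mul_mul {k : ℂ} (hk : k ≠ 0) (p q : ℂ) : ofHomog (k * p) (k * q) = ofHomog p q := by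
  simp [ofHomog, hk, mul_div_mul_left]

lemma exists_homog_ofHomog {p q : ℂ} (h : (p, q) ≠ 0) :
    ∃ k ≠ 0, homog (ofHomog p q) = (k * p, k * q) := by
  by_cases hq : q = 0
  · have hp : p ≠ 0 := by simp_all
    exact ⟨p⁻¹, inv_ne_zero hp, by simp [ofHomog, homog, hq, hp]⟩
  · exact ⟨q⁻¹, inv_ne_zero hq, by simp [ofHomog, homog, hq, div_eq_inv_mul]⟩

end Moebius

open Moebius

lemma moebiusMap_eq_ofHomog (a b c d : ℂ) (z : Option ℂ) :
    moebiusMap a b c d z =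
      ofHomog (a * (homog z).1 + b * (homog z).2) (c * (homog z).1 + d * (homog z).2) := by
  cases z <;> simp [moebiusMap, homog, ofHomog]

lemma moebiusMap_comp {a b c d : ℂ} (h : a * d - b * c ≠ 0) (a' b' c' d' : ℂ) :
    moebiusMap a' b' c' d' ∘ moebiusMap a b c d =
      moebiusMap (a' * a + b' * c) (a' * b + b' * d) (c' * a + d' * c) (c' * b + d' * d) := by
  funext z
  have hz := homog_ne_zero z
  rw [Function.comp_apply, moebiusMap_eq_ofHomog a b c d z, moebiusMap_eq_ofHomog _ _ _ _ z]
  generalize homog z = u at hz ⊢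
  obtain ⟨z₁, z₂⟩ := u
  have hpq : (a * z₁ + b * z₂, c * z₁ + d * z₂) ≠ 0 := by
    intro hpq
    simp only [Prod.ext_iff, Prod.fst_zero, Prod.snd_zero] at hpq
    apply hz
    ext
    · exact (mul_eq_zero.mp (by linear_combination d * hpq.1 - b * hpq.2)).resolve_left h
    · exact (mul_eq_zero.mp (by linear_combination a * hpq.2 - c * hpq.1)).resolve_left h
  obtain ⟨k, hk, hkpq⟩ := exists_homog_ofHomog hpq
  rw [moebiusMap_eq_ofHomog, hkpq]
  conv_rhs => rw [← ofHomog_mul_mul hk]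
  congr 1 <;> ring

lemma moebiusMap_scalar {k : ℂ} (hk : k ≠ 0) (z : Option ℂ) : moebiusMap k 0 0 k z = z := by
  cases z <;> simp [moebiusMap, hk]

lemma IsMoebius.comp {φ ψ : Option ℂ → Option ℂ} (hφ : IsMoebius φ) (hψ : IsMoebius ψ) :
    IsMoebius (φ ∘ ψ) := by
  obtain ⟨a', b', c', d', h', rfl⟩ := hφ
  obtain ⟨a, b, c, d, h, rfl⟩ := hψ
  refine ⟨_, _, _, _, ?_, moebiusMap_comp h a' b' c' d'⟩
  rw [show (a' * a + b' * c) * (c' * b + d' * d) - (a' * b + b' * d) * (c' * a + d' * c) =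
    (a' * d' - b' * c') * (a * d - b * c) by ring]
  exact mul_ne_zero h' h

lemma IsMoebius.exists_leftInverse {φ : Option ℂ → Option ℂ} (hφ : IsMoebius φ) :
    ∃ ψ, IsMoebius ψ ∧ Function.LeftInverse ψ φ := by
  obtain ⟨a, b, c, d, h, rfl⟩ := hφ
  refine ⟨_, ⟨d, -b, -c, a, by rwa [show d * a - -b * -c = a * d - b * c by ring], rfl⟩,
    fun z => ?_⟩
  rw [← Function.comp_apply (f := moebiusMap d _ _ _), moebiusMap_comp h]
  convert moebiusMap_scalar h z using 2 <;> ring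

lemma IsMoebius.injective {φ : Option ℂ → Option ℂ} (hφ : IsMoebius φ) :
    Function.Injective φ := by
  obtain ⟨ψ, -, hψ⟩ := hφ.exists_leftInverse
  exact hψ.injective

/-- The chart sending `p, q, r` to `0, 1, ∞` is `z ↦ [z, p] [q, r] / ([z, r] [q, p])`. -/
lemma exists_isMoebius_normalize {p q r : Option ℂ} (hpq : p ≠ q) (hpr : p ≠ r) (hqr : q ≠ r) :
    ∃ σ, IsMoebius σ ∧ σ p = some 0 ∧ σ q = some 1 ∧ σ r = none := by
  set P := homog p
  set Q := homog q
  set R := homog r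
  have hQP : cross Q P ≠ 0 := cross_homog_ne_zero hpq.symm
  have hPR : cross P R ≠ 0 := cross_homog_ne_zero hpr
  have hQR : cross Q R ≠ 0 := cross_homog_ne_zero hqr
  have hself (U : ℂ × ℂ) : cross U U = 0 := by simp only [cross]; ring
  have hσ (z : Option ℂ) :
      moebiusMap (cross Q R * P.2) (-(cross Q R * P.1)) (cross Q P * R.2) (-(cross Q P * R.1)) z
        = ofHomog (cross Q R * cross (homog z) P) (cross Q P * cross (homog z) R) := by
    rw [moebiusMap_eq_ofHomog]
    congr 1 <;> simp only [cross] <;> ring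
  refine ⟨moebiusMap (cross Q R * P.2) (-(cross Q R * P.1)) (cross Q P * R.2) (-(cross Q P * R.1)),
    ⟨_, _, _, _, ?_, rfl⟩, ?_, ?_, ?_⟩
  · rw [show cross Q R * P.2 * -(cross Q P * R.1) - -(cross Q R * P.1) * (cross Q P * R.2) =
      cross Q R * cross Q P * cross P R by simp only [cross]; ring]
    exact mul_ne_zero (mul_ne_zero hQR hQP) hPR
  · rw [hσ]
    change ofHomog (cross Q R * cross P P) (cross Q P * cross P R) = some 0
    rw [hself, mul_zero, ofHomog, if_neg (mul_ne_zero hQP hPR), zero_div]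
  · rw [hσ]
    change ofHomog (cross Q R * cross Q P) (cross Q P * cross Q R) = some 1
    rw [mul_comm, ofHomog, if_neg (mul_ne_zero hQP hQR), div_self (mul_ne_zero hQP hQR)]
  · rw [hσ]
    change ofHomog (cross Q R * cross R P) (cross Q P * cross R R) = none
    rw [hself, mul_zero, ofHomog, if_pos rfl]

lemma exists_isMoebius_of_comp_eq {α : Type*} {f f' : α → Option ℂ} {σ σ' : Option ℂ → Option ℂ}
    (hσ : IsMoebius σ) (hσ' : IsMoebius σ') (h : ∀ x, σ (f x) = σ' (f' x)) :
    ∃ φ, IsMoebius φ ∧ ∀ x, f' x = φ (f x) := by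
  obtain ⟨ψ, hψ, hψσ'⟩ := hσ'.exists_leftInverse
  exact ⟨ψ ∘ σ, hψ.comp hσ, fun x => by rw [Function.comp_apply, h, hψσ']⟩

section Branch

variable {V : Type*} {G : SimpleGraph V} {v w p q r : V}

lemma mem_branch_self (h : p ≠ v) : p ∈ Branch G v p :=
  ⟨Walk.nil, by simpa using h.symm⟩

lemma ne_of_mem_branch (h : q ∈ Branch G v p) : p ≠ v := by
  obtain ⟨P, hP⟩ := h
  exact fun hp => hP (hp ▸ P.start_mem_support)

lemma ne_of_mem_branch' (h : q ∈ Branch G v p) : q ≠ v := by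
  obtain ⟨P, hP⟩ := h
  exact fun hq => hP (hq ▸ P.end_mem_support)

lemma mem_branch_comm : q ∈ Branch G v p ↔ p ∈ Branch G v q :=
  ⟨fun ⟨P, hP⟩ => ⟨P.reverse, by simpa using hP⟩, fun ⟨P, hP⟩ => ⟨P.reverse, by simpa using hP⟩⟩

lemma mem_branch_trans (hq : q ∈ Branch G v p) (hr : r ∈ Branch G v q) : r ∈ Branch G v p := by
  obtain ⟨P, hP⟩ := hq
  obtain ⟨Q, hQ⟩ := hr
  exact ⟨P.append Q, by simp [hP, hQ]⟩

lemma branch_eq_of_mem (h : q ∈ Branch G v p) : Branch G v q = Branch G v p :=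
  Set.ext fun _ => ⟨mem_branch_trans h, mem_branch_trans (mem_branch_comm.mp h)⟩

lemma mem_branch_of_adj (h : G.Adj p q) (hp : p ≠ v) (hq : q ≠ v) : q ∈ Branch G v p :=
  ⟨Walk.cons h Walk.nil, by simp [hp.symm, hq.symm]⟩

/-- Cutting a path from `q` to `w` at its first visit to `v`. -/
lemma mem_branch_or_mem_branch (hr : G.Reachable q w) (hvw : v ≠ w) :
    q ∈ Branch G v w ∨ q ∈ Branch G w v := by
  classical
  obtain ⟨P⟩ := hr
  by_cases hv : v ∈ P.bypass.support
  · exact .inr ⟨(P.bypass.takeUntil v hv).reverse,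
      by simpa using Walk.endpoint_notMem_support_takeUntil P.bypass_isPath hv hvw.symm⟩
  · exact .inl ⟨P.bypass.reverse, by simpa using hv⟩

lemma exists_adj_mem_branch (hr : G.Reachable v w) (h : v ≠ w) :
    ∃ u, G.Adj v u ∧ w ∈ Branch G v u := by
  classical
  obtain ⟨P⟩ := hr
  have hP := P.bypass_isPath
  generalize P.bypass = Q at hP
  cases Q with
  | nil => exact absurd rfl h
  | cons hadj rest => exact ⟨_, hadj, rest, (Walk.cons_isPath_iff _ _).mp hP |>.2⟩

lemma sameBranch_iff_mem_branch (hG : G.Preconnected) : SameBranch G v p q ↔ q ∈ Branch G v p := by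
  refine ⟨fun ⟨u, _, hp, hq⟩ => mem_branch_trans (mem_branch_comm.mp hp) hq, fun h => ?_⟩
  obtain ⟨u, hvu, hp⟩ := exists_adj_mem_branch (hG v p) (ne_of_mem_branch h).symm
  exact ⟨u, hvu, hp, mem_branch_trans hp h⟩

namespace SimpleGraph

lemma IsAcyclic.notMem_branch_of_mem_branch (hG : G.IsAcyclic) (h : G.Adj v w)
    (hq : q ∈ Branch G v w) : q ∉ Branch G w v := by
  obtain ⟨P, hP⟩ := hq
  rintro ⟨Q, hQ⟩
  -- together the two walks join `v` to `w` without crossing the bridge `s(v, w)`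
  have hbridge := isBridge_iff_forall_walk_mem_edges.mp (isAcyclic_iff_forall_adj_isBridge.mp hG h)
    (Q.append P.reverse)
  rw [Walk.edges_append, List.mem_append] at hbridge
  rcases hbridge with he | he
  · exact hQ (Q.snd_mem_support_of_mem_edges he)
  · exact hP (by simpa using P.reverse.fst_mem_support_of_mem_edges he)

lemma IsAcyclic.notMem_branch_of_adj (hG : G.IsAcyclic) (hp : G.Adj v p) (hq : G.Adj v q)
    (hpq : p ≠ q) : q ∉ Branch G v p := fun h =>
  hG.notMem_branch_of_mem_branch hq (mem_branch_comm.mp h) (mem_branch_of_adj hp hq.ne hpq)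

lemma IsTree.mem_branch_iff_notMem_branch (hG : G.IsTree) (h : G.Adj v w) :
    q ∈ Branch G v w ↔ q ∉ Branch G w v :=
  ⟨hG.isAcyclic.notMem_branch_of_mem_branch h,
    (mem_branch_or_mem_branch (hG.connected.preconnected q w) h.ne).resolve_right⟩

lemma IsTree.branch_subset_branch (hG : G.IsTree) {u z : V} (hvu : G.Adj v u) (huz : G.Adj u z)
    (hzv : z ≠ v) : Branch G u z ⊆ Branch G v u := by
  intro q hq
  by_contra hq'
  have hqv := (mem_branch_or_mem_branch (hG.connected.preconnected q u) hvu.ne).resolve_left hq'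
  exact hG.isAcyclic.notMem_branch_of_adj huz hvu.symm hzv
    (mem_branch_trans hq (mem_branch_comm.mp hqv))

end SimpleGraph

end Branch

section Separates

variable {V : Type*} {G : SimpleGraph V} {v w : V} {p : Fin 3 → V}

lemma Fin.exists_ne_iff_three (P : Fin 3 → Prop) : ∃ i j, i ≠ j ∧ (P i ↔ P j) := by
  classical
  obtain ⟨i, j, hij, h⟩ := Fintype.exists_ne_map_eq_of_card_lt (fun i => decide (P i)) (by simp)
  exact ⟨i, j, hij, by simpa using h⟩

def Separates (G : SimpleGraph V) (v : V) (p : Fin 3 → V) : Prop :=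
  Pairwise fun i j => p j ∉ Branch G v (p i)

lemma Separates.exists_notMem_branch (h : Separates G v p) (a b : V) :
    ∃ i, p i ∉ Branch G v a ∧ p i ∉ Branch G v b := by
  by_contra! hab
  obtain ⟨i, j, hij, hiff⟩ := Fin.exists_ne_iff_three fun i => p i ∈ Branch G v a
  by_cases hi : p i ∈ Branch G v a
  · exact h hij (by rw [branch_eq_of_mem hi]; exact hiff.mp hi)
  · exact h hij (by rw [branch_eq_of_mem (hab i hi)]; exact hab j (hiff.not.mp hi))

lemma Separates.injective (h : Separates G v p) (hp : ∀ i, p i ≠ v) : Function.Injective p :=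
  fun i j hij => by_contra fun hne => h hne (by rw [hij]; exact mem_branch_self (hp j))

lemma Separates.eq (hG : G.Preconnected) (hv : Separates G v p) (hw : Separates G w p) : v = w := by
  by_contra hvw
  obtain ⟨i, j, hij, hiff⟩ := Fin.exists_ne_iff_three fun i => p i ∈ Branch G v w
  have hside (k : Fin 3) (hk : p k ∉ Branch G v w) : p k ∈ Branch G w v :=
    (mem_branch_or_mem_branch (hG _ _) hvw).resolve_left hk
  by_cases hi : p i ∈ Branch G v w
  · exact hv hij (by rw [branch_eq_of_mem hi]; exact hiff.mp hi)
  · exact hw hij (by rw [branch_eq_of_mem (hside i hi)]; exact hside j (hiff.not.mp hi))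

/-- Take `c` separating `p 0` from `p 1` and `p 2` with the largest branch towards `p 0`. If `p 1`
and `p 2` lay in one branch at `c`, the neighbour of `c` in that branch would do better. -/
lemma SimpleGraph.IsTree.exists_separates [Finite V] (hG : G.IsTree) (p : Fin 3 → V) :
    ∃ c, Separates G c p := by
  have hconn := hG.connected.preconnected
  obtain ⟨c, ⟨hc1, hc2⟩, hmax⟩ := Set.exists_max_image
    {c | p 1 ∉ Branch G c (p 0) ∧ p 2 ∉ Branch G c (p 0)} (fun c => (Branch G c (p 0)).ncard)
    (Set.toFinite _) ⟨p 0, fun h => ne_of_mem_branch h rfl, fun h => ne_of_mem_branch h rfl⟩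
  have h12 : p 2 ∉ Branch G c (p 1) := by
    intro h12
    obtain ⟨u, hcu, hu1⟩ := exists_adj_mem_branch (hconn c (p 1)) (ne_of_mem_branch h12).symm
    have hu0 : p 0 ∉ Branch G c u := fun h => hc1 (by rw [branch_eq_of_mem h]; exact hu1)
    have hbr : Branch G u (p 0) = Branch G u c :=
      branch_eq_of_mem ((mem_branch_or_mem_branch (hconn _ _) hcu.ne).resolve_left hu0)
    have hsub : Branch G c (p 0) ⊂ Branch G u (p 0) := by
      rw [hbr, Set.ssubset_iff_of_subset]
      · exact ⟨c, mem_branch_self hcu.ne, fun h => ne_of_mem_branch' h rfl⟩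
      · intro q hq
        refine (mem_branch_or_mem_branch (hconn _ _) hcu.ne).resolve_left fun h => hu0 ?_
        exact mem_branch_trans h (mem_branch_comm.mp hq)
    refine (hmax u ⟨?_, ?_⟩).not_gt (Set.ncard_lt_ncard hsub (Set.toFinite _))
    · rw [hbr]; exact hG.isAcyclic.notMem_branch_of_mem_branch hcu hu1
    · rw [hbr]; exact hG.isAcyclic.notMem_branch_of_mem_branch hcu (mem_branch_trans hu1 h12)
  have hc1' : p 0 ∉ Branch G c (p 1) := mt mem_branch_comm.mp hc1
  have hc2' : p 0 ∉ Branch G c (p 2) := mt mem_branch_comm.mp hc2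
  have h12' : p 1 ∉ Branch G c (p 2) := mt mem_branch_comm.mp h12
  refine ⟨c, fun i j hij => ?_⟩
  fin_cases i <;> fin_cases j <;> first | exact absurd rfl hij | assumption

end Separates

section Marked

variable {X V V' : Type*} {G : SimpleGraph V} {G' : SimpleGraph V'} {m : X → V} {m' : X → V'}
  {v w : V}

/-- For internal `v`, the class of `x` in the partition of `X` induced at `v`; empty when
`m x = v`. -/
def leafBranch (G : SimpleGraph V) (m : X → V) (v : V) (x : X) : Set X :=
  {y | m y ∈ Branch G v (m x)}

namespace MarkedStableTree

lemma exists_adj_ne_ne (hT : MarkedStableTree X V G m) (hv : v ∉ Set.range m) (a b : V) :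
    ∃ u, G.Adj v u ∧ u ≠ a ∧ u ≠ b := by
  have hcard : ({a, b} : Set V).ncard < (G.neighborSet v).ncard := by
    have := Set.ncard_insert_le a {b}
    have := hT.stable v hv
    rw [Set.ncard_singleton] at *
    omega
  obtain ⟨u, hu, hab⟩ := Set.exists_mem_notMem_of_ncard_lt_ncard hcard
  simp only [Set.mem_insert_iff, Set.mem_singleton_iff, not_or] at hab
  exact ⟨u, hu, hab⟩

lemma exists_leaf_mem_branch [Finite V] (hT : MarkedStableTree X V G m) {u : V} (h : G.Adj v u) :
    ∃ x, m x ∈ Branch G v u := by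
  induction hn : (Branch G v u).ncard using Nat.strong_induction_on generalizing v u with
  | _ n ih =>
  by_cases hu : u ∈ Set.range m
  · obtain ⟨x, rfl⟩ := hu
    exact ⟨x, mem_branch_self h.ne'⟩
  obtain ⟨z, huz, hzv, -⟩ := hT.exists_adj_ne_ne hu v v
  have hsub : Branch G u z ⊂ Branch G v u :=
    (Set.ssubset_iff_of_subset (hT.tree.branch_subset_branch h huz hzv)).mpr
      ⟨u, mem_branch_self h.ne', fun hu' => ne_of_mem_branch' hu' rfl⟩
  obtain ⟨x, hx⟩ := ih _ (hn ▸ Set.ncard_lt_ncard hsub (Set.toFinite _)) huz rfl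
  exact ⟨x, hsub.subset hx⟩

lemma leafBranch_leaf (hT : MarkedStableTree X V G m) (z : X) :
    leafBranch G m (m z) = fun x => {y | x ≠ z ∧ y ≠ z} := by
  obtain ⟨n, hn⟩ := Set.ncard_eq_one.mp ((hT.leaf_iff (m z)).mpr ⟨z, rfl⟩)
  have hbranch (y : X) (hy : y ≠ z) : m y ∈ Branch G (m z) n := by
    obtain ⟨u, hu, hyu⟩ :=
      exists_adj_mem_branch (hT.tree.connected.preconnected _ _) (hT.inj.ne hy.symm)
    have hun : u ∈ ({n} : Set V) := hn ▸ hu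
    rwa [Set.mem_singleton_iff.mp hun] at hyu
  ext x y
  refine ⟨fun h => ⟨fun hx => ne_of_mem_branch h (congrArg m hx),
    fun hy => ne_of_mem_branch' h (congrArg m hy)⟩, fun ⟨hx, hy⟩ => ?_⟩
  exact mem_branch_trans (mem_branch_comm.mp (hbranch x hx)) (hbranch y hy)

lemma exists_separates_of_notMem_range [Finite V] (hT : MarkedStableTree X V G m)
    (hv : v ∉ Set.range m) : ∃ x : Fin 3 → X, Separates G v (m ∘ x) := by
  obtain ⟨u₀, h₀, -, -⟩ := hT.exists_adj_ne_ne hv v v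
  obtain ⟨u₁, h₁, h₁₀, -⟩ := hT.exists_adj_ne_ne hv u₀ u₀
  obtain ⟨u₂, h₂, h₂₀, h₂₁⟩ := hT.exists_adj_ne_ne hv u₀ u₁
  have hu : Function.Injective ![u₀, u₁, u₂] := by
    intro i j h
    fin_cases i <;> fin_cases j <;> simp_all [eq_comm]
  have hadj (i : Fin 3) : G.Adj v (![u₀, u₁, u₂] i) := by
    fin_cases i <;> assumption
  choose x hx using fun i => hT.exists_leaf_mem_branch (hadj i)
  refine ⟨x, fun i j hij hj => hT.tree.isAcyclic.notMem_branch_of_adj (hadj i) (hadj j)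
    (hu.ne hij) ?_⟩
  rw [← branch_eq_of_mem (hx i)]
  exact mem_branch_trans hj (mem_branch_comm.mp (hx j))

lemma exists_leaf_notMem_branch [Finite V] (hT : MarkedStableTree X V G m) (v a b : V) :
    ∃ x, m x ∉ Branch G v a ∧ m x ∉ Branch G v b := by
  by_cases hv : v ∈ Set.range m
  · obtain ⟨x, rfl⟩ := hv
    exact ⟨x, fun h => ne_of_mem_branch' h rfl, fun h => ne_of_mem_branch' h rfl⟩
  · obtain ⟨x, hx⟩ := hT.exists_separates_of_notMem_range hv
    obtain ⟨i, hi⟩ := hx.exists_notMem_branch a b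
    exact ⟨x i, hi⟩

lemma notMem_range_of_separates (hT : MarkedStableTree X V G m) {x : Fin 3 → X}
    (hx : Function.Injective x) (h : Separates G v (m ∘ x)) : v ∉ Set.range m := by
  rintro ⟨z, rfl⟩
  obtain ⟨i, j, hij, hiff⟩ := Fin.exists_ne_iff_three fun i => x i = z
  have hi : x i ≠ z := fun hi => hij (hx (hi.trans (hiff.mp hi).symm))
  apply h hij
  change x j ∈ leafBranch G m (m z) (x i)
  rw [hT.leafBranch_leaf]
  exact ⟨hi, hiff.not.mp hi⟩

lemma exists_separates_leaves [Finite V] (hT : MarkedStableTree X V G m) {x : Fin 3 → X}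
    (hx : Function.Injective x) : ∃ v ∉ Set.range m, Separates G v (m ∘ x) := by
  obtain ⟨v, hv⟩ := hT.tree.exists_separates (m ∘ x)
  exact ⟨v, hT.notMem_range_of_separates hx hv, hv⟩

lemma leafBranch_injective [Finite V] (hT : MarkedStableTree X V G m) :
    Function.Injective (leafBranch G m) := by
  intro v w h
  by_cases hv : v ∈ Set.range m
  · obtain ⟨z, rfl⟩ := hv
    have hz : z ∉ leafBranch G m w z := h ▸ fun hz => ne_of_mem_branch' hz rfl
    by_contra hw
    exact hz (mem_branch_self hw)
  · obtain ⟨x, hx⟩ := hT.exists_separates_of_notMem_range hv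
    refine hx.eq hT.tree.connected.preconnected fun i j hij hj => hx hij ?_
    change x j ∈ leafBranch G m v (x i)
    rwa [h]

lemma exists_leafBranch_eq_compl_of_adj [Finite V] (hT : MarkedStableTree X V G m)
    (h : G.Adj v w) : ∃ y z, leafBranch G m v y = (leafBranch G m w z)ᶜ := by
  obtain ⟨y, hy⟩ := hT.exists_leaf_mem_branch h
  obtain ⟨z, hz⟩ := hT.exists_leaf_mem_branch h.symm
  refine ⟨y, z, Set.ext fun x => ?_⟩
  change m x ∈ Branch G v (m y) ↔ m x ∉ Branch G w (m z)
  rw [branch_eq_of_mem hy, branch_eq_of_mem hz]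
  exact hT.tree.mem_branch_iff_notMem_branch h

lemma notMem_leafBranch_of_eq_compl [Finite V] (hT : MarkedStableTree X V G m) {x y z : X}
    (h : leafBranch G m v y = (leafBranch G m w z)ᶜ) (hvw : v ≠ w) (hxv : m x ∈ Branch G v w)
    (hxw : m x ∈ Branch G w v) : x ∉ leafBranch G m v y := by
  intro hxy
  have hyw : m y ∈ Branch G v w := mem_branch_trans hxv (mem_branch_comm.mp hxy)
  obtain ⟨x₂, hx₂, -⟩ := hT.exists_leaf_notMem_branch v w w
  have hx₂z : x₂ ∈ leafBranch G m w z := by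
    have hx₂y : x₂ ∉ leafBranch G m v y := fun h' => hx₂ (mem_branch_trans hyw h')
    rwa [h, Set.notMem_compl_iff] at hx₂y
  have hzv : m z ∈ Branch G w v := mem_branch_trans
    ((mem_branch_or_mem_branch (hT.tree.connected.preconnected _ _) hvw).resolve_left hx₂)
    (mem_branch_comm.mp hx₂z)
  rw [h] at hxy
  apply hxy
  change m x ∈ Branch G w (m z)
  rwa [branch_eq_of_mem hzv]

lemma adj_of_leafBranch_eq_compl [Finite V] (hT : MarkedStableTree X V G m) {y z : X}
    (h : leafBranch G m v y = (leafBranch G m w z)ᶜ) : G.Adj v w := by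
  have hconn := hT.tree.connected.preconnected
  have hvw : v ≠ w := by
    rintro rfl
    obtain ⟨x, hxy, hxz⟩ := hT.exists_leaf_notMem_branch v (m y) (m z)
    exact hxy ((Set.ext_iff.mp h x).mpr hxz)
  by_contra hadj
  obtain ⟨u, hvu, hwu⟩ := exists_adj_mem_branch (hconn v w) hvw
  have huw : u ≠ w := fun huw => hadj (huw ▸ hvu)
  have hvwu : v ∈ Branch G w u := by
    refine (mem_branch_or_mem_branch (hconn _ _) huw.symm).resolve_right fun hv => ?_
    exact hT.tree.isAcyclic.notMem_branch_of_mem_branch hvu hwu (mem_branch_comm.mp hv)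
  obtain ⟨x, hxu, hxw⟩ := hT.exists_leaf_notMem_branch u v w
  have hxv' : m x ∈ Branch G v w := by
    rw [branch_eq_of_mem hwu]
    exact (mem_branch_or_mem_branch (hconn _ _) hvu.ne).resolve_right hxu
  have hxw' : m x ∈ Branch G w v := by
    rw [branch_eq_of_mem hvwu]
    exact (mem_branch_or_mem_branch (hconn _ _) huw.symm).resolve_right hxw
  have h' : leafBranch G m w z = (leafBranch G m v y)ᶜ := by rw [h, compl_compl]
  have hx := hT.notMem_leafBranch_of_eq_compl h hvw hxv' hxw'
  rw [h] at hx
  exact hx (hT.notMem_leafBranch_of_eq_compl h' hvw.symm hxw' hxv')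

lemma adj_iff [Finite V] (hT : MarkedStableTree X V G m) :
    G.Adj v w ↔ ∃ y z, leafBranch G m v y = (leafBranch G m w z)ᶜ :=
  ⟨hT.exists_leafBranch_eq_compl_of_adj, fun ⟨_, _, h⟩ => hT.adj_of_leafBranch_eq_compl h⟩

lemma exists_iso [Finite V] [Finite V'] (hT : MarkedStableTree X V G m)
    (hT' : MarkedStableTree X V' G' m') (g : V → V')
    (hg : ∀ v, leafBranch G' m' (g v) = leafBranch G m v)
    (hsurj : ∀ v', ∃ v, leafBranch G m v = leafBranch G' m' v') :
    ∃ e : G ≃g G', ∀ v, e v = g v := by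
  have hbij : Function.Bijective g := by
    refine ⟨fun v w h => hT.leafBranch_injective (by rw [← hg, h, hg]), fun v' => ?_⟩
    obtain ⟨v, hv⟩ := hsurj v'
    exact ⟨v, hT'.leafBranch_injective (by rw [hg, hv])⟩
  refine ⟨⟨Equiv.ofBijective g hbij, fun {v w} => ?_⟩, fun _ => rfl⟩
  change G'.Adj (g v) (g w) ↔ G.Adj v w
  rw [hT.adj_iff, hT'.adj_iff, hg, hg]

end MarkedStableTree

end Marked

section Charts

variable {X V V' : Type*} {G : SimpleGraph V} {G' : SimpleGraph V'} {m : X → V} {m' : X → V'}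
  {a : V → X → Option ℂ} {a' : V' → X → Option ℂ} {v : V}

/-- `𝔅(T) = 𝔅(T')`. -/
def ChartMarkingsAgree (m : X → V) (a : V → X → Option ℂ) (m' : X → V')
    (a' : V' → X → Option ℂ) : Prop :=
  ∀ x0 x1 x2 x3 : X, x0 ≠ x1 → x0 ≠ x2 → x0 ≠ x3 → x1 ≠ x2 → x1 ≠ x3 → x2 ≠ x3 →
    ∀ v, v ∉ Set.range m → a v x0 ≠ a v x1 → a v x0 ≠ a v x2 → a v x1 ≠ a v x2 →
    ∀ v', v' ∉ Set.range m' → a' v' x0 ≠ a' v' x1 → a' v' x0 ≠ a' v' x2 →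
      a' v' x1 ≠ a' v' x2 →
    ∀ σ σ' : Option ℂ → Option ℂ, IsMoebius σ → IsMoebius σ' →
      σ (a v x0) = some 0 → σ (a v x1) = some 1 → σ (a v x2) = none →
      σ' (a' v' x0) = some 0 → σ' (a' v' x1) = some 1 → σ' (a' v' x2) = none →
      σ (a v x3) = σ' (a' v' x3)

lemma ChartMarkingsAgree.symm (h : ChartMarkingsAgree m a m' a') : ChartMarkingsAgree m' a' m a :=
  fun x0 x1 x2 x3 h01 h02 h03 h12 h13 h23 v' hv' s01' s02' s12' v hv s01 s02 s12 σ' σ hσ' hσ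
    h0' h1' h2' h0 h1 h2 =>
  (h x0 x1 x2 x3 h01 h02 h03 h12 h13 h23 v hv s01 s02 s12 v' hv' s01' s02' s12' σ σ' hσ hσ'
    h0 h1 h2 h0' h1' h2').symm

namespace SphereTree

lemma leafBranch_eq (hT : SphereTree X V G m a) (hv : v ∉ Set.range m) (x : X) :
    leafBranch G m v x = {y | a v x = a v y} := by
  ext y
  rw [Set.mem_ofPred_eq, hT.compat v hv,
    sameBranch_iff_mem_branch hT.marked.tree.connected.preconnected]
  rfl

lemma separates_iff (hT : SphereTree X V G m a) (hv : v ∉ Set.range m) (x : Fin 3 → X) :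
    Separates G v (m ∘ x) ↔ Pairwise fun i j => a v (x i) ≠ a v (x j) := by
  refine forall₂_congr fun i j => imp_congr_right fun _ => not_congr ?_
  exact Set.ext_iff.mp (hT.leafBranch_eq hv (x i)) (x j)

lemma exists_moebius_partner [Finite V] [Finite V'] (hT : SphereTree X V G m a)
    (hT' : SphereTree X V' G' m' a') (hB : ChartMarkingsAgree m a m' a') (hv : v ∉ Set.range m) :
    ∃ v' ∉ Set.range m', ∃ φ, IsMoebius φ ∧ ∀ x, a' v' x = φ (a v x) := by
  obtain ⟨x, hx⟩ := hT.marked.exists_separates_of_notMem_range hv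
  have hx_inj : Function.Injective x := (hx.injective fun i h => hv ⟨x i, h⟩).of_comp
  obtain ⟨v', hv', hx'⟩ := hT'.marked.exists_separates_leaves hx_inj
  have sep (i j : Fin 3) (hij : i ≠ j := by decide) : a v (x i) ≠ a v (x j) :=
    (hT.separates_iff hv x).mp hx hij
  have sep' (i j : Fin 3) (hij : i ≠ j := by decide) : a' v' (x i) ≠ a' v' (x j) :=
    (hT'.separates_iff hv' x).mp hx' hij
  obtain ⟨σ, hσ, h0, h1, h2⟩ := exists_isMoebius_normalize (sep 0 1) (sep 0 2) (sep 1 2)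
  obtain ⟨σ', hσ', h0', h1', h2'⟩ := exists_isMoebius_normalize (sep' 0 1) (sep' 0 2) (sep' 1 2)
  refine ⟨v', hv', exists_isMoebius_of_comp_eq hσ hσ' fun y => ?_⟩
  by_cases hy0 : y = x 0
  · rw [hy0, h0, h0']
  by_cases hy1 : y = x 1
  · rw [hy1, h1, h1']
  by_cases hy2 : y = x 2
  · rw [hy2, h2, h2']
  exact hB _ _ _ y (hx_inj.ne (by decide)) (hx_inj.ne (by decide)) (Ne.symm hy0)
    (hx_inj.ne (by decide)) (Ne.symm hy1) (Ne.symm hy2) v hv (sep 0 1) (sep 0 2) (sep 1 2)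
    v' hv' (sep' 0 1) (sep' 0 2) (sep' 1 2) σ σ' hσ hσ' h0 h1 h2 h0' h1' h2'

lemma exists_leafBranch_partner [Finite V] [Finite V'] (hT : SphereTree X V G m a)
    (hT' : SphereTree X V' G' m' a') (hB : ChartMarkingsAgree m a m' a') (v : V) :
    ∃ v', leafBranch G' m' v' = leafBranch G m v ∧
      (v ∉ Set.range m → ∃ φ, IsMoebius φ ∧ ∀ x, a' v' x = φ (a v x)) := by
  by_cases hv : v ∈ Set.range m
  · obtain ⟨z, rfl⟩ := hv
    exact ⟨m' z, by rw [hT'.marked.leafBranch_leaf, hT.marked.leafBranch_leaf],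
      fun h => absurd ⟨z, rfl⟩ h⟩
  obtain ⟨v', hv', φ, hφ, hφa⟩ := hT.exists_moebius_partner hT' hB hv
  refine ⟨v', funext fun x => Set.ext fun y => ?_, fun _ => ⟨φ, hφ, hφa⟩⟩
  rw [hT.leafBranch_eq hv, hT'.leafBranch_eq hv', Set.mem_ofPred_eq, Set.mem_ofPred_eq, hφa, hφa]
  exact hφ.injective.eq_iff

end SphereTree

end Charts

theorem chart_markings_determine_sphere_tree_general {X V V' : Type*} [Finite V]
    [Finite V']
    (G : SimpleGraph V) (G' : SimpleGraph V') (m : X → V) (m' : X → V')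
    (a : V → X → Option ℂ) (a' : V' → X → Option ℂ)
    (hT : SphereTree X V G m a) (hT' : SphereTree X V' G' m' a')
    (hB : ∀ x0 x1 x2 x3 : X, x0 ≠ x1 → x0 ≠ x2 → x0 ≠ x3 → x1 ≠ x2 → x1 ≠ x3 →
      x2 ≠ x3 →
      ∀ v, v ∉ Set.range m → a v x0 ≠ a v x1 → a v x0 ≠ a v x2 → a v x1 ≠ a v x2 →
      ∀ v', v' ∉ Set.range m' → a' v' x0 ≠ a' v' x1 → a' v' x0 ≠ a' v' x2 →
        a' v' x1 ≠ a' v' x2 →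
      ∀ σ σ' : Option ℂ → Option ℂ, IsMoebius σ → IsMoebius σ' →
        σ (a v x0) = some 0 → σ (a v x1) = some 1 → σ (a v x2) = none →
        σ' (a' v' x0) = some 0 → σ' (a' v' x1) = some 1 → σ' (a' v' x2) = none →
        σ (a v x3) = σ' (a' v' x3)) :
    ∃ g : G ≃g G', (∀ x, g (m x) = m' x) ∧
      ∀ v, v ∉ Set.range m →
        ∃ φ : Option ℂ → Option ℂ, IsMoebius φ ∧ ∀ x, a' (g v) x = φ (a v x) := by
  choose g hg hgφ using hT.exists_leafBranch_partner hT' hB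
  obtain ⟨e, he⟩ := hT.marked.exists_iso hT'.marked g hg fun v' =>
    (hT'.exists_leafBranch_partner hT (ChartMarkingsAgree.symm hB) v').imp fun _ h => h.1
  refine ⟨e, fun x => ?_, fun v hv => he v ▸ hgφ v hv⟩
  rw [he]
  apply hT'.marked.leafBranch_injective
  rw [hg, hT.marked.leafBranch_leaf, hT'.marked.leafBranch_leaf]

/-- the map `𝔅` sending the isomorphism class of a tree of spheres marked
by `X` to the collection of values `α_t(x)` over quadruples `(t, x)` of distinct elements
of `X` is injective: if the chart markings of two trees of spheres agree on all
quadruples (for all separating vertices and normalized Möbius charts), then the trees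
are isomorphic as trees of spheres marked by `X`. -/
theorem chart_markings_determine_sphere_tree {X V V' : Type*} [Finite X] [Finite V]
    [Finite V'] (hX : 3 ≤ Nat.card X)
    (G : SimpleGraph V) (G' : SimpleGraph V') (m : X → V) (m' : X → V')
    (a : V → X → Option ℂ) (a' : V' → X → Option ℂ)
    (hT : SphereTree X V G m a) (hT' : SphereTree X V' G' m' a')
    (hB : ∀ x0 x1 x2 x3 : X, x0 ≠ x1 → x0 ≠ x2 → x0 ≠ x3 → x1 ≠ x2 → x1 ≠ x3 →
      x2 ≠ x3 →
      ∀ v, v ∉ Set.range m → a v x0 ≠ a v x1 → a v x0 ≠ a v x2 → a v x1 ≠ a v x2 →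
      ∀ v', v' ∉ Set.range m' → a' v' x0 ≠ a' v' x1 → a' v' x0 ≠ a' v' x2 →
        a' v' x1 ≠ a' v' x2 →
      ∀ σ σ' : Option ℂ → Option ℂ, IsMoebius σ → IsMoebius σ' →
        σ (a v x0) = some 0 → σ (a v x1) = some 1 → σ (a v x2) = none →
        σ' (a' v' x0) = some 0 → σ' (a' v' x1) = some 1 → σ' (a' v' x2) = none →
        σ (a v x3) = σ' (a' v' x3)) :
    ∃ g : G ≃g G', (∀ x, g (m x) = m' x) ∧
      ∀ v, v ∉ Set.range m →
        ∃ φ : Option ℂ → Option ℂ, IsMoebius φ ∧ ∀ x, a' (g v) x = φ (a v x) :=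
  chart_markings_determine_sphere_tree_general G G' m m' a a' hT hT' hB

end
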